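/- The number of decreasing labellings of a binary tree T with n nodes (labellings by 1,...,n in which every node's label exceeds all labels in its subtree) equals n! divided by the product over all nodes v of T of the size h_v of the subtree rooted at v (the hook length formula for binary trees). -/

import Mathlib

/-- Unlabelled binary trees. -/
inductive Tree0 where
  | leaf : Tree0
  | node : Tree0 → Tree0 → Tree0
deriving DecidableEq

namespace Tree0

/-- Number of nodes. -/
def size : Tree0 → ℕ
  | leaf => 0
  | node l r => size l + size r + 1

/-- The product over all nodes `v` of the size `h_v` of the subtree rooted at `v`. -/
def hookProd : Tree0 → ℕ
  | leaf => 1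
  | node l r => (size l + size r + 1) * hookProd l * hookProd r

end Tree0

/-- Labelled binary trees (labels in `ℕ`). -/
inductive BT where
  | leaf : BT
  | node : BT → ℕ → BT → BT
deriving DecidableEq

namespace BT

/-- Underlying unlabelled shape. -/
def shape : BT → Tree0
  | leaf => Tree0.leaf
  | node l _ r => Tree0.node (shape l) (shape r)

/-- Inorder list of labels. -/
def labels : BT → List ℕ
  | leaf => []
  | node l x r => labels l ++ x :: labels r

/-- A decreasing labelling: every node's label strictly exceeds all labels in the
subtrees of its children. -/
def IsDecreasing : BT → Prop
  | leaf => True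
  | node l x r =>
      (∀ y ∈ labels l, y < x) ∧ (∀ y ∈ labels r, y < x) ∧ IsDecreasing l ∧ IsDecreasing r

end BT

/-!
The root of a decreasing labelling carries the largest label; the remaining labels split into a
set of `h_l` labels, labelled decreasingly on the left subtree, and its complement, labelled
decreasingly on the right. Counting decreasing labellings `f(T)` by an arbitrary finite label set
of size `h_T` therefore gives `f(node l r) = C(h_l + h_r, h_l) f(l) f(r)`, and
`f(T) * ∏ h_v = h_T!` follows by induction since
`C(h_l + h_r, h_l) h_l! h_r! (h_l + h_r + 1) = (h_l + h_r + 1)!`.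
-/

open scoped Finset Nat

theorem List.perm_iff_nodup_and_toFinset_eq {α : Type*} [DecidableEq α] {l L : List α}
    (hL : L.Nodup) : l.Perm L ↔ l.Nodup ∧ l.toFinset = L.toFinset :=
  ⟨fun h => ⟨h.nodup_iff.mpr hL, List.toFinset_eq_of_perm _ _ h⟩,
    fun h => List.perm_of_nodup_nodup_toFinset_eq h.1 hL h.2⟩

theorem List.nodup_and_toFinset_append_cons_eq_iff {α : Type*} [DecidableEq α]
    {l r : List α} {x : α} {S : Finset α} :
    (l ++ x :: r).Nodup ∧ (l ++ x :: r).toFinset = S ↔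
      x ∈ S ∧ l.Nodup ∧ r.Nodup ∧ l.toFinset ⊆ S.erase x ∧ r.toFinset = S.erase x \ l.toFinset := by
  simp only [List.nodup_append, List.nodup_cons, Finset.ext_iff, Finset.subset_iff,
    List.mem_toFinset, List.mem_append, List.mem_cons, Finset.mem_sdiff, Finset.mem_erase]
  grind

namespace BT

theorem length_labels (t : BT) : t.labels.length = t.shape.size := by
  induction t with
  | leaf => rfl
  | node l x r ihl ihr => simp [labels, shape, Tree0.size, ihl, ihr]; omega

theorem le_of_mem_labels_node {l r : BT} {x y : ℕ} (ht : (node l x r).IsDecreasing)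
    (hy : y ∈ (node l x r).labels) : y ≤ x := by
  obtain ⟨hl, hr, -, -⟩ := ht
  simp only [labels, List.mem_append, List.mem_cons] at hy
  rcases hy with hy | rfl | hy
  · exact (hl y hy).le
  · exact le_rfl
  · exact (hr y hy).le

def IsDecreasingLabelling (S : Finset ℕ) (t : BT) : Prop :=
  t.IsDecreasing ∧ t.labels.Nodup ∧ t.labels.toFinset = S

theorem isDecreasingLabelling_node_iff {S : Finset ℕ} (hS : S.Nonempty) {t₁ t₂ : BT} {x : ℕ} :
    IsDecreasingLabelling S (node t₁ x t₂) ↔ x = S.max' hS ∧ t₁.labels.toFinset ⊆ S.erase x ∧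
      IsDecreasingLabelling t₁.labels.toFinset t₁ ∧
      IsDecreasingLabelling (S.erase x \ t₁.labels.toFinset) t₂ := by
  constructor
  · rintro ⟨hdec, hlabels⟩
    have hmax : x = S.max' hS := by
      refine le_antisymm (S.le_max' x ?_) (S.max'_le hS x fun y hy => ?_)
      · simp [← hlabels.2, labels]
      · exact le_of_mem_labels_node hdec (by simpa [← hlabels.2] using hy)
    obtain ⟨-, hnd₁, hnd₂, hsub, hB⟩ := List.nodup_and_toFinset_append_cons_eq_iff.mp hlabels
    exact ⟨hmax, hsub, ⟨hdec.2.2.1, hnd₁, rfl⟩, ⟨hdec.2.2.2, hnd₂, hB⟩⟩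
  · rintro ⟨rfl, hsub, ⟨hdec₁, hnd₁, -⟩, ⟨hdec₂, hnd₂, hB⟩⟩
    refine ⟨⟨fun y hy => ?_, fun y hy => ?_, hdec₁, hdec₂⟩,
      List.nodup_and_toFinset_append_cons_eq_iff.mpr ⟨S.max'_mem hS, hnd₁, hnd₂, hsub, hB⟩⟩
    · exact S.lt_max'_of_mem_erase_max' hS (hsub (List.mem_toFinset.mpr hy))
    · exact S.lt_max'_of_mem_erase_max' hS
        (Finset.mem_sdiff.mp (hB ▸ List.mem_toFinset.mpr hy)).1

def decreasingLabellings : Tree0 → Finset ℕ → Finset BT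
  | .leaf, S => if S = ∅ then {leaf} else ∅
  | .node l r, S =>
    if h : S.Nonempty then
      ((S.erase (S.max' h)).powersetCard l.size).biUnion fun A =>
        (decreasingLabellings l A ×ˢ decreasingLabellings r (S.erase (S.max' h) \ A)).image
          fun p => node p.1 (S.max' h) p.2
    else ∅

theorem mem_decreasingLabellings {T : Tree0} {S : Finset ℕ} {t : BT} :
    t ∈ decreasingLabellings T S ↔ t.shape = T ∧ IsDecreasingLabelling S t := by
  induction T generalizing S t with
  | leaf =>
    cases t with
    | leaf =>
      rw [decreasingLabellings]
      split_ifs <;> simp_all [shape, IsDecreasingLabelling, IsDecreasing, labels, eq_comm]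
    | node =>
      rw [decreasingLabellings]
      split_ifs <;> simp [shape]
  | node l r ihl ihr =>
    cases t with
    | leaf =>
      rw [decreasingLabellings]
      split_ifs <;> simp [shape]
    | node t₁ x t₂ =>
      by_cases hS : S.Nonempty
      swap
      · simp [decreasingLabellings, IsDecreasingLabelling, labels,
          Finset.not_nonempty_iff_eq_empty.mp hS]
      simp only [decreasingLabellings, dif_pos hS, Finset.mem_biUnion, Finset.mem_image,
        Finset.mem_product, Finset.mem_powersetCard, ihl, ihr, shape, Tree0.node.injEq,
        isDecreasingLabelling_node_iff hS, node.injEq]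
      constructor
      · rintro ⟨A, ⟨hA, -⟩, ⟨u₁, u₂⟩, ⟨⟨h₁, hu₁⟩, h₂, hu₂⟩, rfl, rfl, rfl⟩
        obtain rfl : u₁.labels.toFinset = A := hu₁.2.2
        exact ⟨⟨h₁, h₂⟩, rfl, hA, hu₁, hu₂⟩
      · rintro ⟨⟨h₁, h₂⟩, rfl, hsub, hu₁, hu₂⟩
        refine ⟨_, ⟨hsub, ?_⟩, (t₁, t₂), ⟨⟨h₁, hu₁⟩, h₂, hu₂⟩, rfl, rfl, rfl⟩
        rw [List.toFinset_card_of_nodup hu₁.2.1, length_labels, h₁]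

theorem card_decreasingLabellings_node {l r : Tree0} {S : Finset ℕ} (hS : S.Nonempty) :
    #(decreasingLabellings (.node l r) S) = ∑ A ∈ (S.erase (S.max' hS)).powersetCard l.size,
      #(decreasingLabellings l A) * #(decreasingLabellings r (S.erase (S.max' hS) \ A)) := by
  rw [decreasingLabellings, dif_pos hS, Finset.card_biUnion]
  · refine Finset.sum_congr rfl fun A _ => ?_
    rw [Finset.card_image_of_injective, Finset.card_product]
    rintro ⟨u₁, u₂⟩ ⟨v₁, v₂⟩ h
    simp_all
  · -- the left subtree of a tree built from `A` has label set `A`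
    intro A _ B _ hAB
    simp only [Function.onFun, Finset.disjoint_left, Finset.mem_image, Finset.mem_product]
    rintro _ ⟨⟨u₁, u₂⟩, ⟨hu₁, -⟩, rfl⟩ ⟨⟨v₁, v₂⟩, ⟨hv₁, -⟩, heq⟩
    simp only [node.injEq] at heq
    obtain ⟨rfl, -, rfl⟩ := heq
    exact hAB ((mem_decreasingLabellings.mp hu₁).2.2.2.symm.trans
      (mem_decreasingLabellings.mp hv₁).2.2.2)

theorem card_decreasingLabellings_mul_hookProd {T : Tree0} {S : Finset ℕ} (hS : #S = T.size) :
    #(decreasingLabellings T S) * T.hookProd = T.size ! := by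
  induction T generalizing S with
  | leaf => simp [Finset.card_eq_zero.mp hS, decreasingLabellings, Tree0.hookProd, Tree0.size]
  | node l r ihl ihr =>
    have hne : S.Nonempty := Finset.card_pos.mp (by simp [hS, Tree0.size])
    set E := S.erase (S.max' hne)
    have hE : #E = l.size + r.size := by
      simp [E, Finset.card_erase_of_mem (S.max'_mem hne), hS, Tree0.size]
    have hsplit : ∀ A ∈ E.powersetCard l.size,
        #(decreasingLabellings l A) * #(decreasingLabellings r (E \ A)) *
          (l.hookProd * r.hookProd) = l.size ! * r.size ! := by
      intro A hA
      rw [Finset.mem_powersetCard] at hA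
      have hB : #(E \ A) = r.size := by
        rw [Finset.card_sdiff_of_subset hA.1, hE, hA.2]; omega
      rw [← ihl hA.2, ← ihr hB]; ring
    calc #(decreasingLabellings (.node l r) S) * (Tree0.node l r).hookProd
        = (l.size + r.size + 1) * ∑ A ∈ E.powersetCard l.size,
            #(decreasingLabellings l A) * #(decreasingLabellings r (E \ A)) *
              (l.hookProd * r.hookProd) := by
          rw [card_decreasingLabellings_node hne, Tree0.hookProd, Finset.sum_mul, Finset.mul_sum]
          exact Finset.sum_congr rfl fun A _ => by ring
      _ = (l.size + r.size + 1) * ((l.size + r.size).choose r.size * l.size ! * r.size !) := by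
          rw [Finset.sum_congr rfl hsplit, Finset.sum_const, Finset.card_powersetCard, hE,
            smul_eq_mul, Nat.choose_symm_add]
          ring
      _ = (Tree0.node l r).size ! := by
          rw [Nat.add_choose_mul_factorial_mul_factorial, Tree0.size, Nat.factorial_succ]

end BT

/-- hook length formula for binary trees. The number of decreasing
labellings of a binary tree `T` with `n` nodes by `1,…,n` equals `n!` divided by the
product of the subtree sizes `h_v` over all nodes `v`. -/
theorem hook_length_formula (T : Tree0) (n : ℕ) (hn : T.size = n) :
    (Set.ncard {t : BT | BT.shape t = T ∧ BT.IsDecreasing t ∧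
        (BT.labels t).Perm (List.range' 1 n)}) * Tree0.hookProd T
      = Nat.factorial n := by
  have hS : #(List.range' 1 n).toFinset = T.size := by
    rw [List.toFinset_card_of_nodup List.nodup_range', List.length_range', hn]
  have hset : {t : BT | BT.shape t = T ∧ BT.IsDecreasing t ∧
      (BT.labels t).Perm (List.range' 1 n)} =
        BT.decreasingLabellings T (List.range' 1 n).toFinset := by
    ext t
    simp only [Set.mem_ofPred_eq, Finset.mem_coe, BT.mem_decreasingLabellings,
      BT.IsDecreasingLabelling, List.perm_iff_nodup_and_toFinset_eq List.nodup_range']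
  rw [hset, Set.ncard_coe_finset, BT.card_decreasingLabellings_mul_hookProd hS, hn]
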